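/- Let R be a semiprime associative ring and let I be a Lie nilpotent one-sided (left or right) ideal of R. Then I ∩ R₂ = 0, where R₂ = [R,R] + [R,R]·R is the two-sided ideal of R generated by all commutators [r₁,r₂]. -/

import Mathlib

/-- `I` is a right ideal of `R` (as an additive subgroup closed under right multiplication). -/
def IsRightIdealSG {R : Type*} [Ring R] (I : AddSubgroup R) : Prop :=
  ∀ i ∈ I, ∀ r : R, i * r ∈ I

/-- `I` is a left ideal of `R`. -/
def IsLeftIdealSG {R : Type*} [Ring R] (I : AddSubgroup R) : Prop :=
  ∀ i ∈ I, ∀ r : R, r * i ∈ I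

/-- `I` is a two-sided ideal of `R`. -/
def IsIdealSG {R : Type*} [Ring R] (I : AddSubgroup R) : Prop :=
  IsLeftIdealSG I ∧ IsRightIdealSG I

/-- Left-normed iterated commutator: `itComm s n = [[...[s 0, s 1],...], s n]`
(a left-normed commutator of `n + 1` elements). -/
def itComm {R : Type*} [Ring R] (s : ℕ → R) : ℕ → R
  | 0 => s 0
  | n + 1 => itComm s n * s (n + 1) - s (n + 1) * itComm s n

/-- `S` is Lie nilpotent of class ≤ m : every left-normed commutator of `m + 1`
elements of `S` vanishes. -/
def LieNilpotentClassLe {R : Type*} [Ring R] (S : Set R) (m : ℕ) : Prop :=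
  ∀ s : ℕ → R, (∀ n, s n ∈ S) → itComm s m = 0

/-- The Lie derived series of an additive subgroup `S` of a ring:
`D 0 = S`, `D (k+1)` = additive span of `[D k, D k]`. -/
def derSeries {R : Type*} [Ring R] (S : AddSubgroup R) : ℕ → AddSubgroup R
  | 0 => S
  | n + 1 => AddSubgroup.closure
      {x | ∃ a ∈ derSeries S n, ∃ b ∈ derSeries S n, x = a * b - b * a}

/-- `R^(−)_n`: the additive subgroup generated by all left-normed commutators of
`n` elements of `R`. -/
def lcs (R : Type*) [Ring R] (n : ℕ) : AddSubgroup R :=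
  AddSubgroup.closure {x | ∃ s : ℕ → R, x = itComm s (n - 1)}

/-- `R_n = R^(−)_n + R^(−)_n · R`, a two-sided ideal of `R`. -/
def Rn (R : Type*) [Ring R] (n : ℕ) : AddSubgroup R :=
  lcs R n ⊔ AddSubgroup.closure {x | ∃ c ∈ lcs R n, ∃ r : R, x = c * r}

/-- The additive span of `k`-fold products of elements of `S`. -/
def spanPow {R : Type*} [Ring R] (S : Set R) (k : ℕ) : AddSubgroup R :=
  AddSubgroup.closure {x | ∃ l : List R, l.length = k ∧ (∀ a ∈ l, a ∈ S) ∧ x = l.prod}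

/-- `J` is nilpotent: all `k`-fold products of its elements vanish for some `k > 0`. -/
def IsNilpotentSG {R : Type*} [Ring R] (J : AddSubgroup R) : Prop :=
  ∃ k : ℕ, 0 < k ∧ ∀ l : List R, l.length = k → (∀ a ∈ l, a ∈ J) → l.prod = 0

/-- `R` is semiprime: it has no nonzero nilpotent two-sided ideals. -/
def IsSemiprimeRing (R : Type*) [Ring R] : Prop :=
  ∀ J : AddSubgroup R, IsIdealSG J → IsNilpotentSG J → J = ⊥

/-!
Semiprimeness is used through one consequence: `x * r * x = 0` for all `r` forces `x = 0`,
since the two-sided ideal generated by such an `x` squares to zero.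

If all commutators of `k + 2` elements of a one-sided ideal `I` vanish, a commutator
`c = [d, x]` of `k + 1` elements commutes with all of `I`, and the relations `[[d, d x], x] = 0`
(left ideals) or `[[d, x d], x] = 0` (right ideals) give `c * c = 0`; then `c * r * c = 0` for
every `r`, so `c = 0` and the class drops. Hence `I` is commutative, and a commutative
one-sided ideal of a semiprime ring is central. A central left ideal is annihilated on the left
by every commutator and therefore by `R₂`, so an `x ∈ I ∩ R₂` is central with `x * x = 0`,
whence `x = 0`.
-/

section
variable {R : Type*} [Ring R]

theorem isLeftIdealSG_closure {S : Set R} (hS : ∀ t, ∀ y ∈ S, t * y ∈ S) :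
    IsLeftIdealSG (AddSubgroup.closure S) := fun _ hj t =>
  (AddSubgroup.closure_le ((AddSubgroup.closure S).comap (AddMonoidHom.mulLeft t))).mpr
    (fun y hy => AddSubgroup.subset_closure (hS t y hy)) hj

theorem isRightIdealSG_closure {S : Set R} (hS : ∀ y ∈ S, ∀ t, y * t ∈ S) :
    IsRightIdealSG (AddSubgroup.closure S) := fun _ hj t =>
  (AddSubgroup.closure_le ((AddSubgroup.closure S).comap (AddMonoidHom.mulRight t))).mpr
    (fun y hy => AddSubgroup.subset_closure (hS y hy t)) hj

theorem mul_eq_zero_of_mem_closure {S T : Set R} (h : ∀ a ∈ S, ∀ b ∈ T, a * b = 0) {a b : R}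
    (ha : a ∈ AddSubgroup.closure S) (hb : b ∈ AddSubgroup.closure T) : a * b = 0 := by
  have haT : ∀ b ∈ T, a * b = 0 := fun b hb =>
    (AddSubgroup.closure_le (AddMonoidHom.mulRight b).ker).mpr (fun a ha => h a ha b hb) ha
  exact (AddSubgroup.closure_le (AddMonoidHom.mulLeft a).ker).mpr haT hb

theorem IsSemiprimeRing.eq_bot_of_mul_eq_zero (hsp : IsSemiprimeRing R) {J : AddSubgroup R}
    (hJ : IsIdealSG J) (h : ∀ a ∈ J, ∀ b ∈ J, a * b = 0) : J = ⊥ :=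
  hsp J hJ ⟨2, two_pos, fun l hl hmem => by
    obtain ⟨a, b, rfl⟩ := List.length_eq_two.mp hl
    simpa using h a (hmem a (by simp)) b (hmem b (by simp))⟩

theorem IsSemiprimeRing.eq_zero_of_forall_mul_mul_eq_zero (hsp : IsSemiprimeRing R) {x : R}
    (h : ∀ r, x * r * x = 0) : x = 0 := by
  let S : Set R := {y | ∃ r s, y = r * x * s}
  have hJ : IsIdealSG (AddSubgroup.closure S) :=
    ⟨isLeftIdealSG_closure fun t _ ⟨r, s, hy⟩ => ⟨t * r, s, by rw [hy]; noncomm_ring⟩,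
      isRightIdealSG_closure fun _ ⟨r, s, hy⟩ t => ⟨r, s * t, by rw [hy]; noncomm_ring⟩⟩
  have hSS : ∀ a ∈ S, ∀ b ∈ S, a * b = 0 := by
    rintro _ ⟨r, s, rfl⟩ _ ⟨r', s', rfl⟩
    calc r * x * s * (r' * x * s') = r * (x * (s * r') * x) * s' := by noncomm_ring
      _ = 0 := by rw [h, mul_zero, zero_mul]
  have hbot := hsp.eq_bot_of_mul_eq_zero hJ fun a ha b hb => mul_eq_zero_of_mem_closure hSS ha hb
  have hx : x ∈ AddSubgroup.closure S := AddSubgroup.subset_closure ⟨1, 1, by simp⟩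
  rwa [hbot, AddSubgroup.mem_bot] at hx

theorem IsSemiprimeRing.eq_zero_of_mul_self_eq_zero_of_commute (hsp : IsSemiprimeRing R)
    {I : AddSubgroup R} (hI : IsLeftIdealSG I ∨ IsRightIdealSG I) {c : R} (hc : c ∈ I)
    (hcomm : ∀ y ∈ I, Commute c y) (hcc : c * c = 0) : c = 0 := by
  refine hsp.eq_zero_of_forall_mul_mul_eq_zero fun r => ?_
  rcases hI with hI | hI
  · calc c * r * c = r * c * c := by rw [mul_assoc, (hcomm _ (hI c hc r)).eq]
      _ = 0 := by rw [mul_assoc, hcc, mul_zero]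
  · calc c * r * c = c * (c * r) := (hcomm _ (hI c hc r)).eq.symm
      _ = 0 := by rw [← mul_assoc, hcc, zero_mul]

theorem IsSemiprimeRing.commute_of_commute_of_isLeftIdealSG (hsp : IsSemiprimeRing R)
    {I : AddSubgroup R} (hI : IsLeftIdealSG I) (hcomm : ∀ a ∈ I, ∀ b ∈ I, Commute a b)
    {a : R} (ha : a ∈ I) (r : R) : Commute a r := by
  have hann : ∀ b ∈ I, (a * r - r * a) * b = 0 := fun b hb => by
    calc (a * r - r * a) * b = a * (r * b) - r * (a * b) := by noncomm_ring
      _ = r * b * a - r * (b * a) := by rw [(hcomm a ha _ (hI b hb r)).eq, (hcomm a ha b hb).eq]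
      _ = 0 := by noncomm_ring
  refine sub_eq_zero.mp (hsp.eq_zero_of_forall_mul_mul_eq_zero fun t => ?_)
  calc (a * r - r * a) * t * (a * r - r * a)
      = (a * r - r * a) * (t * a) * r - (a * r - r * a) * (t * r * a) := by noncomm_ring
    _ = 0 := by rw [hann _ (hI a ha t), hann _ (hI a ha (t * r)), zero_mul, sub_zero]

theorem IsSemiprimeRing.commute_of_commute_of_isRightIdealSG (hsp : IsSemiprimeRing R)
    {I : AddSubgroup R} (hI : IsRightIdealSG I) (hcomm : ∀ a ∈ I, ∀ b ∈ I, Commute a b)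
    {a : R} (ha : a ∈ I) (r : R) : Commute a r := by
  have hann : ∀ b ∈ I, b * (a * r - r * a) = 0 := fun b hb => by
    calc b * (a * r - r * a) = b * a * r - b * r * a := by noncomm_ring
      _ = a * (b * r) - b * r * a := by rw [(hcomm b hb a ha).eq, mul_assoc]
      _ = 0 := by rw [(hcomm a ha _ (hI b hb r)).eq, sub_self]
  refine sub_eq_zero.mp (hsp.eq_zero_of_forall_mul_mul_eq_zero fun t => ?_)
  calc (a * r - r * a) * t * (a * r - r * a)
      = a * (r * t) * (a * r - r * a) - r * (a * t * (a * r - r * a)) := by noncomm_ring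
    _ = 0 := by rw [hann _ (hI a ha (r * t)), hann _ (hI a ha t), mul_zero, sub_zero]

theorem itComm_mem {I : AddSubgroup R} (hmul : ∀ a ∈ I, ∀ b ∈ I, a * b ∈ I) {s : ℕ → R}
    (hs : ∀ n, s n ∈ I) (n : ℕ) : itComm s n ∈ I := by
  induction n with
  | zero => exact hs 0
  | succ n ih => exact sub_mem (hmul _ ih _ (hs _)) (hmul _ (hs _) _ ih)

theorem itComm_congr {s t : ℕ → R} {n : ℕ} (h : ∀ k ≤ n, s k = t k) :
    itComm s n = itComm t n := by
  induction n with
  | zero => exact h 0 le_rfl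
  | succ n ih => simp only [itComm, ih fun k hk => h k (by omega), h (n + 1) le_rfl]

theorem itComm_ite_le (s : ℕ → R) (m : ℕ) (y : R) :
    itComm (fun n => if n ≤ m then s n else y) (m + 1) = itComm s m * y - y * itComm s m := by
  rw [itComm, itComm_congr fun k hk => if_pos hk, if_neg (by omega)]

theorem LieNilpotentClassLe.succ {S : Set R} {m : ℕ} (h : LieNilpotentClassLe S m) :
    LieNilpotentClassLe S (m + 1) := fun s hs => by
  rw [itComm, h s hs, zero_mul, mul_zero, sub_zero]

theorem LieNilpotentClassLe.commute_itComm {S : Set R} {m : ℕ}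
    (h : LieNilpotentClassLe S (m + 1)) {s : ℕ → R} (hs : ∀ n, s n ∈ S) {y : R} (hy : y ∈ S) :
    Commute (itComm s m) y := by
  have h0 := h _ fun n => show (if n ≤ m then s n else y) ∈ S by split_ifs; exacts [hs n, hy]
  rw [itComm_ite_le] at h0
  exact sub_eq_zero.mp h0

theorem LieNilpotentClassLe.commute_commutator_itComm {S : Set R} {m : ℕ}
    (h : LieNilpotentClassLe S (m + 2)) {s : ℕ → R} (hs : ∀ n, s n ∈ S) {z y : R} (hz : z ∈ S)
    (hy : y ∈ S) : Commute (itComm s m * z - z * itComm s m) y := by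
  rw [← itComm_ite_le]
  exact h.commute_itComm (fun n => show (if n ≤ m then s n else z) ∈ S by
    split_ifs; exacts [hs n, hz]) hy

theorem commutator_mul_self_eq_zero_of_commute_left {d x : R} (hc : Commute (d * x - x * d) x)
    (hdc : Commute (d * (d * x) - d * x * d) x) : (d * x - x * d) * (d * x - x * d) = 0 := by
  have hdc' : Commute (d * (d * x - x * d)) x := by rwa [mul_sub, ← mul_assoc d x d]
  calc (d * x - x * d) * (d * x - x * d)
      = d * (x * (d * x - x * d)) - x * (d * (d * x - x * d)) := by noncomm_ring
    _ = 0 := by rw [← hc.eq, ← mul_assoc, hdc'.eq, sub_self]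

theorem commutator_mul_self_eq_zero_of_commute_right {d x : R} (hc : Commute (d * x - x * d) x)
    (hcd : Commute (d * (x * d) - x * d * d) x) : (d * x - x * d) * (d * x - x * d) = 0 := by
  have hcd' : Commute ((d * x - x * d) * d) x := by rwa [sub_mul, mul_assoc]
  calc (d * x - x * d) * (d * x - x * d)
      = (d * x - x * d) * d * x - (d * x - x * d) * x * d := by noncomm_ring
    _ = 0 := by rw [hcd'.eq, hc.eq, mul_assoc, sub_self]

theorem mul_mem_of_isLeftIdealSG_or_isRightIdealSG {I : AddSubgroup R}
    (hI : IsLeftIdealSG I ∨ IsRightIdealSG I) : ∀ a ∈ I, ∀ b ∈ I, a * b ∈ I :=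
  fun a ha b hb => hI.elim (fun hl => hl b hb a) (fun hr => hr a ha b)

theorem IsSemiprimeRing.lieNilpotentClassLe_of_succ (hsp : IsSemiprimeRing R)
    {I : AddSubgroup R} (hI : IsLeftIdealSG I ∨ IsRightIdealSG I) {m : ℕ}
    (h : LieNilpotentClassLe (I : Set R) (m + 2)) : LieNilpotentClassLe (I : Set R) (m + 1) := by
  intro s hs
  have hmul := mul_mem_of_isLeftIdealSG_or_isRightIdealSG hI
  have hd : itComm s m ∈ I := itComm_mem hmul hs m
  have hx : s (m + 1) ∈ I := hs (m + 1)
  have hcomm : ∀ y ∈ I, Commute (itComm s (m + 1)) y := fun _ hy => h.commute_itComm hs hy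
  refine hsp.eq_zero_of_mul_self_eq_zero_of_commute hI (itComm_mem hmul hs _) hcomm ?_
  rcases hI with hI | hI
  · exact commutator_mul_self_eq_zero_of_commute_left (hcomm _ hx)
      (h.commute_commutator_itComm hs (hmul _ hd _ hx) hx)
  · exact commutator_mul_self_eq_zero_of_commute_right (hcomm _ hx)
      (h.commute_commutator_itComm hs (hmul _ hx _ hd) hx)

theorem IsSemiprimeRing.lieNilpotentClassLe_one (hsp : IsSemiprimeRing R) {I : AddSubgroup R}
    (hI : IsLeftIdealSG I ∨ IsRightIdealSG I) :
    ∀ {m : ℕ}, LieNilpotentClassLe (I : Set R) m → LieNilpotentClassLe (I : Set R) 1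
  | 0, h => h.succ
  | 1, h => h
  | _ + 2, h => hsp.lieNilpotentClassLe_one hI (hsp.lieNilpotentClassLe_of_succ hI h)

theorem LieNilpotentClassLe.commute_of_one {S : Set R} (h : LieNilpotentClassLe S 1) {a b : R}
    (ha : a ∈ S) (hb : b ∈ S) : Commute a b :=
  h.commute_itComm (s := fun _ => a) (fun _ => ha) hb

theorem Rn_two_mul_eq_zero {I : AddSubgroup R} (hI : IsLeftIdealSG I)
    (hcent : ∀ a ∈ I, ∀ r : R, Commute a r) {i : R} (hi : i ∈ I) {y : R} (hy : y ∈ Rn R 2) :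
    y * i = 0 := by
  have hlcs : ∀ j ∈ I, lcs R 2 ≤ (AddMonoidHom.mulRight j).ker := fun j hj => by
    refine (AddSubgroup.closure_le _).mpr ?_
    rintro _ ⟨s, rfl⟩
    change (s 0 * s 1 - s 1 * s 0) * j = 0
    calc (s 0 * s 1 - s 1 * s 0) * j = s 0 * (s 1 * j) - s 1 * (s 0 * j) := by noncomm_ring
      _ = 0 := by rw [← (hcent _ (hI j hj (s 1)) (s 0)).eq, mul_assoc, (hcent j hj (s 0)).eq,
          sub_self]
  refine sup_le (hlcs i hi) ((AddSubgroup.closure_le _).mpr ?_) hy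
  rintro _ ⟨c, hc, r, rfl⟩
  change c * r * i = 0
  rw [mul_assoc]
  exact hlcs (r * i) (hI i hi r) hc

end

/-- **Corollary 2, second part.** In a semiprime ring, a Lie nilpotent
one-sided ideal `I` has trivial intersection with `R₂ = [R,R] + [R,R]·R`. -/
theorem semiprime_lie_nilpotent_ideal_inter_R2 {R : Type*} [Ring R]
    (hsp : IsSemiprimeRing R)
    (I : AddSubgroup R) (hI : IsLeftIdealSG I ∨ IsRightIdealSG I)
    (hnil : ∃ m, LieNilpotentClassLe (I : Set R) m) :
    I ⊓ Rn R 2 = ⊥ := by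
  obtain ⟨m, hm⟩ := hnil
  have hcomm : ∀ a ∈ I, ∀ b ∈ I, Commute a b := fun _ ha _ hb =>
    (hsp.lieNilpotentClassLe_one hI hm).commute_of_one ha hb
  have hcent : ∀ a ∈ I, ∀ r : R, Commute a r := hI.elim
    (fun hl _ ha => hsp.commute_of_commute_of_isLeftIdealSG hl hcomm ha)
    (fun hr _ ha => hsp.commute_of_commute_of_isRightIdealSG hr hcomm ha)
  have hleft : IsLeftIdealSG I := hI.elim id fun hr i hi r => (hcent i hi r).eq ▸ hr i hi r
  rw [eq_bot_iff]
  rintro x ⟨hxI, hxR⟩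
  exact hsp.eq_zero_of_mul_self_eq_zero_of_commute hI hxI (fun y _ => hcent x hxI y)
    (Rn_two_mul_eq_zero hleft hcent hxI hxR)
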